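/- For any policies π, π' and distribution μ, we have μ(v_{π'} − v_π) ≤ (1/(1−γ)) d_{μ,π'} (T_* v_π − v_π). -/

import Mathlib

/-!
Let `Q = P_{π'}` and `M = 1 - γ Q`. Subtracting `v` from the Bellman equation `v' = r_{π'} + γ Q v'`
gives `M (v' - v) = T_{π'} v - v`, so `μ (v' - v) = (μ M⁻¹) (T_{π'} v - v)`, and
`μ M⁻¹ = d / (1 - γ)`. A discrete maximum principle for `M` (at a minimum of `x`, `M x ≥ 0`
forces `(1 - γ) x ≥ 0`) shows that `M` is invertible with a nonnegative inverse, so `d ≥ 0`;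
finally `T_{π'} v ≤ T_* v` because a policy average of action values is at most their maximum.
-/

open Matrix Finset

namespace MDP

section Stochastic

variable {S : Type*} [Fintype S] [DecidableEq S] {Q : Matrix S S ℝ} {γ : ℝ}

theorem le_mulVec_apply_of_forall_le (hQ : Q ∈ rowStochastic ℝ S) {x : S → ℝ} {s₀ : S}
    (hs₀ : ∀ s, x s₀ ≤ x s) : x s₀ ≤ (Q *ᵥ x) s₀ :=
  calc x s₀ = ∑ s, Q s₀ s * x s₀ := by rw [← sum_mul, sum_row_of_mem_rowStochastic hQ, one_mul]
    _ ≤ ∑ s, Q s₀ s * x s :=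
      sum_le_sum fun s _ => mul_le_mul_of_nonneg_left (hs₀ s) (nonneg_of_mem_rowStochastic hQ)

theorem nonneg_of_nonneg_one_sub_smul_mulVec (hQ : Q ∈ rowStochastic ℝ S) (hγ0 : 0 ≤ γ)
    (hγ1 : γ < 1) {x : S → ℝ} (hx : 0 ≤ (1 - γ • Q) *ᵥ x) : 0 ≤ x := by
  intro s
  have : Nonempty S := ⟨s⟩
  obtain ⟨s₀, hs₀⟩ := Finite.exists_min x
  have hQx : x s₀ ≤ (Q *ᵥ x) s₀ := le_mulVec_apply_of_forall_le hQ hs₀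
  have hMx : 0 ≤ x s₀ - γ * (Q *ᵥ x) s₀ := by
    simpa [sub_mulVec, smul_mulVec] using hx s₀
  have hγx : 0 ≤ (1 - γ) * x s₀ := by nlinarith
  exact ((mul_nonneg_iff_of_pos_left (by linarith)).mp hγx).trans (hs₀ s)

theorem isUnit_det_one_sub_smul (hQ : Q ∈ rowStochastic ℝ S) (hγ0 : 0 ≤ γ) (hγ1 : γ < 1) :
    IsUnit (1 - γ • Q).det := by
  refine isUnit_iff_ne_zero.mpr fun hdet => ?_
  obtain ⟨x, hx0, hMx⟩ := exists_mulVec_eq_zero_iff.mpr hdet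
  have hpos : 0 ≤ x := nonneg_of_nonneg_one_sub_smul_mulVec hQ hγ0 hγ1 hMx.ge
  have hneg : 0 ≤ -x :=
    nonneg_of_nonneg_one_sub_smul_mulVec hQ hγ0 hγ1 (by rw [mulVec_neg, hMx, neg_zero])
  exact hx0 (le_antisymm (neg_nonneg.mp hneg) hpos)

theorem inv_one_sub_smul_nonneg (hQ : Q ∈ rowStochastic ℝ S) (hγ0 : 0 ≤ γ) (hγ1 : γ < 1)
    (i j : S) : 0 ≤ (1 - γ • Q)⁻¹ i j := by
  have hcol : 0 ≤ (1 - γ • Q)⁻¹ *ᵥ Pi.single j 1 := by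
    apply nonneg_of_nonneg_one_sub_smul_mulVec hQ hγ0 hγ1
    rw [mulVec_mulVec, mul_nonsing_inv _ (isUnit_det_one_sub_smul hQ hγ0 hγ1), one_mulVec]
    exact Pi.single_nonneg.mpr zero_le_one
  simpa [mulVec_single_one] using hcol i

end Stochastic

theorem sub_eq_inv_mulVec_of_eq_add_smul_mulVec {S K : Type*} [Fintype S] [DecidableEq S]
    [CommRing K] {Q : Matrix S S K} {γ : K} (hM : IsUnit (1 - γ • Q).det) {r v v' : S → K}
    (hv' : v' = r + γ • Q *ᵥ v') : v' - v = (1 - γ • Q)⁻¹ *ᵥ (r + γ • Q *ᵥ v - v) := by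
  have : (1 - γ • Q) *ᵥ (v' - v) = r + γ • Q *ᵥ v - v := by
    simp only [sub_mulVec, one_mulVec, smul_mulVec, mulVec_sub]
    nth_rw 1 [hv']
    abel
  rw [← this, mulVec_mulVec, nonsing_inv_mul _ hM, one_mulVec]

theorem sum_mul_le_sup' {A : Type*} [Fintype A] [Nonempty A] {w f : A → ℝ} (hw0 : ∀ a, 0 ≤ w a)
    (hw1 : ∑ a, w a = 1) : ∑ a, w a * f a ≤ univ.sup' univ_nonempty f :=
  calc ∑ a, w a * f a ≤ ∑ a, w a * univ.sup' univ_nonempty f :=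
        sum_le_sum fun a _ => mul_le_mul_of_nonneg_left (le_sup' f (mem_univ a)) (hw0 a)
    _ = univ.sup' univ_nonempty f := by rw [← sum_mul, hw1, one_mul]

variable {S A : Type*} [Fintype S] [Fintype A]

def policyMatrix (P : S → A → S → ℝ) (π : S → A → ℝ) : Matrix S S ℝ :=
  of fun s s' => ∑ a, π s a * P s a s'

def policyReward (R : S → A → ℝ) (π : S → A → ℝ) : S → ℝ :=
  fun s => ∑ a, π s a * R s a

def actionValue (P : S → A → S → ℝ) (R : S → A → ℝ) (γ : ℝ) (v : S → ℝ) (s : S) (a : A) : ℝ :=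
  R s a + γ * ∑ s', P s a s' * v s'

theorem policyMatrix_mem_rowStochastic [DecidableEq S] {P : S → A → S → ℝ} {π : S → A → ℝ}
    (hP0 : ∀ s a s', 0 ≤ P s a s') (hP1 : ∀ s a, ∑ s', P s a s' = 1)
    (hπ0 : ∀ s a, 0 ≤ π s a) (hπ1 : ∀ s, ∑ a, π s a = 1) :
    policyMatrix P π ∈ rowStochastic ℝ S := by
  refine mem_rowStochastic_iff_sum.mpr
    ⟨fun s s' => sum_nonneg fun a _ => mul_nonneg (hπ0 s a) (hP0 s a s'), fun s => ?_⟩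
  simp only [policyMatrix, of_apply]
  rw [sum_comm]
  simp only [← mul_sum, hP1, mul_one, hπ1]

theorem policyReward_add_smul_policyMatrix_mulVec (P : S → A → S → ℝ) (R : S → A → ℝ)
    (π : S → A → ℝ) (γ : ℝ) (v : S → ℝ) (s : S) :
    (policyReward R π + γ • policyMatrix P π *ᵥ v) s = ∑ a, π s a * actionValue P R γ v s a := by
  simp only [Pi.add_apply, Pi.smul_apply, smul_eq_mul, policyReward, actionValue, mul_add,
    sum_add_distrib, mulVec, dotProduct, policyMatrix, of_apply, sum_mul, mul_sum]
  rw [sum_comm]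
  congr 1
  refine sum_congr rfl fun a _ => sum_congr rfl fun s' _ => ?_
  ring

end MDP

open MDP

theorem mean_value_difference_le_occupancy_residual_general
    {S A : Type*} [Fintype S] [Fintype A] [Nonempty A] [DecidableEq S]
    (P : S → A → S → ℝ) (hP0 : ∀ s a s', 0 ≤ P s a s')
    (hP1 : ∀ s a, ∑ s', P s a s' = 1)
    (R : S → A → ℝ) (γ : ℝ) (hγ0 : 0 < γ) (hγ1 : γ < 1)
    (π' : S → A → ℝ)
    (hπ'0 : ∀ s a, 0 ≤ π' s a) (hπ'1 : ∀ s, ∑ a, π' s a = 1)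
    (v v' : S → ℝ)
    (hv' : ∀ s, v' s = (∑ a, π' s a * R s a)
        + γ * ∑ s', (∑ a, π' s a * P s a s') * v' s')
    (μ : S → ℝ) (hμ0 : ∀ s, 0 ≤ μ s)
    (d : S → ℝ)
    (hd : d = (1 - γ) • Matrix.vecMul μ
        (1 - γ • Matrix.of fun s s' => ∑ a, π' s a * P s a s')⁻¹) :
    ∑ s, μ s * (v' s - v s)
      ≤ (1 / (1 - γ)) * ∑ s, d s *
          (Finset.univ.sup' Finset.univ_nonempty
            (fun a => R s a + γ * ∑ s', P s a s' * v s') - v s) := by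
  change d = (1 - γ) • μ ᵥ* (1 - γ • policyMatrix P π')⁻¹ at hd
  have hQ := policyMatrix_mem_rowStochastic hP0 hP1 hπ'0 hπ'1
  set u := policyReward R π' + γ • policyMatrix P π' *ᵥ v - v
  have hdiff : v' - v = (1 - γ • policyMatrix P π')⁻¹ *ᵥ u :=
    sub_eq_inv_mulVec_of_eq_add_smul_mulVec (isUnit_det_one_sub_smul hQ hγ0.le hγ1) (funext hv')
  have hμM : μ ᵥ* (1 - γ • policyMatrix P π')⁻¹ = (1 / (1 - γ)) • d := by
    rw [hd, smul_smul, one_div_mul_cancel (by linarith), one_smul]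
  have hd0 : 0 ≤ d := by
    rw [hd]
    exact smul_nonneg (by linarith) fun s =>
      sum_nonneg fun t _ => mul_nonneg (hμ0 t) (inv_one_sub_smul_nonneg hQ hγ0.le hγ1 t s)
  have hu : u ≤ fun s => univ.sup' univ_nonempty (actionValue P R γ v s) - v s := fun s =>
    sub_le_sub_right ((policyReward_add_smul_policyMatrix_mulVec P R π' γ v s).trans_le
      (sum_mul_le_sup' (hπ'0 s) (hπ'1 s))) _
  calc ∑ s, μ s * (v' s - v s) = μ ⬝ᵥ (v' - v) := rfl
    _ = (1 / (1 - γ)) * (d ⬝ᵥ u) := by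
      rw [hdiff, dotProduct_mulVec, hμM, smul_dotProduct, smul_eq_mul]
    _ ≤ _ := mul_le_mul_of_nonneg_left (dotProduct_le_dotProduct_of_nonneg_left hu hd0)
      (one_div_nonneg.mpr (by linarith))

/-- `μ(v_{π'} − v_π) ≤ (1/(1−γ)) d_{μ,π'} (T_* v_π − v_π)`. -/
theorem mean_value_difference_le_occupancy_residual
    {S A : Type*} [Fintype S] [Fintype A] [Nonempty A] [DecidableEq S]
    (P : S → A → S → ℝ) (hP0 : ∀ s a s', 0 ≤ P s a s')
    (hP1 : ∀ s a, ∑ s', P s a s' = 1)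
    (R : S → A → ℝ) (γ : ℝ) (hγ0 : 0 < γ) (hγ1 : γ < 1)
    (π π' : S → A → ℝ)
    (hπ0 : ∀ s a, 0 ≤ π s a) (hπ1 : ∀ s, ∑ a, π s a = 1)
    (hπ'0 : ∀ s a, 0 ≤ π' s a) (hπ'1 : ∀ s, ∑ a, π' s a = 1)
    (v v' : S → ℝ)
    (hv : ∀ s, v s = (∑ a, π s a * R s a)
        + γ * ∑ s', (∑ a, π s a * P s a s') * v s')
    (hv' : ∀ s, v' s = (∑ a, π' s a * R s a)
        + γ * ∑ s', (∑ a, π' s a * P s a s') * v' s')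
    (μ : S → ℝ) (hμ0 : ∀ s, 0 ≤ μ s) (hμ1 : ∑ s, μ s = 1)
    (d : S → ℝ)
    (hd : d = (1 - γ) • Matrix.vecMul μ
        (1 - γ • Matrix.of fun s s' => ∑ a, π' s a * P s a s')⁻¹) :
    ∑ s, μ s * (v' s - v s)
      ≤ (1 / (1 - γ)) * ∑ s, d s *
          (Finset.univ.sup' Finset.univ_nonempty
            (fun a => R s a + γ * ∑ s', P s a s' * v s') - v s) :=
  mean_value_difference_le_occupancy_residual_general P hP0 hP1 R γ hγ0 hγ1 π' hπ'0 hπ'1 v v' hv' μ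
    hμ0 d hd
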